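/- arXiv:1904.06283 — 3 statements merged into one kernel-verified Lean document; each statement's English description precedes it below -/
import Mathlib

section
/- If π, π' ∈ S_n satisfy π' = swap_i(π) and some entry larger than i+1 lies between i and i+1 in π, then swap_i maps the postorder-preimage set 𝒫⁻¹(π) bijectively onto 𝒫⁻¹(π'), and this bijection preserves the skeleton (the underlying unlabeled rooted plane tree) of each decreasing plane tree. -/
/-!
If `i` were a child of `i + 1` in a decreasing tree, the subtree rooted at `i + 1` would occupy
a contiguous block of the postorder reading, ending with `i + 1` and otherwise consisting of
smaller entries; so no entry larger than `i + 1` could lie between `i` and `i + 1`. Hence, under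
the hypothesis, `i` is never a child of `i + 1`, and exchanging the two labels keeps the tree
decreasing. The hypothesis is symmetric in `i` and `i + 1`, so the same holds for the trees
reading `π'`, and the involution `swapᵢ` is a bijection; it only touches labels, so it preserves
the skeleton.
-/

/-- `l` is a permutation of `{1, …, n}`, written as a word. -/
def IsPermList (n : ℕ) (l : List ℕ) : Prop := l.Perm (List.range' 1 n)

/-- The word obtained from `l` by exchanging the positions of the entries `i` and `i+1`. -/
def swapEntries (i : ℕ) (l : List ℕ) : List ℕ :=
  l.map fun x => if x = i then i + 1 else if x = i + 1 then i else x

/-- Some entry larger than `i+1` appears (strictly) between the entries `i` and `i+1`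
in the word `l`. -/
def ToggleApplies (i : ℕ) (l : List ℕ) : Prop :=
  ∃ a ∈ l, i + 1 < a ∧
    min (l.idxOf i) (l.idxOf (i + 1)) < l.idxOf a ∧
    l.idxOf a < max (l.idxOf i) (l.idxOf (i + 1))

open scoped Classical in
/-- The polyurethane toggle `p i`. -/
noncomputable def toggle (i : ℕ) (l : List ℕ) : List ℕ :=
  if ToggleApplies i l then swapEntries i l else l

/-- Rooted plane trees with vertices labeled by natural numbers. -/
inductive PTree where
  | node : ℕ → List PTree → PTree

/-- Unlabeled rooted plane trees (the skeletons of labeled plane trees). -/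
inductive PShape where
  | node : List PShape → PShape

def PTree.rootLabel : PTree → ℕ
  | .node a _ => a

/-- The postorder reading of a labeled plane tree. -/
def PTree.postorder : PTree → List ℕ
  | .node a ts => (ts.attach.map fun t => t.1.postorder).flatten ++ [a]
termination_by t => sizeOf t
decreasing_by
  have := List.sizeOf_lt_of_mem t.2
  simp only [PTree.node.sizeOf_spec]
  omega

/-- The skeleton (underlying unlabeled rooted plane tree) of a labeled plane tree. -/
def PTree.shape : PTree → PShape
  | .node _ ts => .node (ts.attach.map fun t => t.1.shape)
termination_by t => sizeOf t
decreasing_by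
  have := List.sizeOf_lt_of_mem t.2
  simp only [PTree.node.sizeOf_spec]
  omega

/-- Relabel every vertex of a plane tree by `f`. -/
def PTree.relabel (f : ℕ → ℕ) : PTree → PTree
  | .node a ts => .node (f a) (ts.attach.map fun t => t.1.relabel f)
termination_by t => sizeOf t
decreasing_by
  have := List.sizeOf_lt_of_mem t.2
  simp only [PTree.node.sizeOf_spec]
  omega

/-- A decreasing plane tree: every nonroot label is smaller than its parent's label. -/
inductive PTree.Decreasing : PTree → Prop
  | node (a : ℕ) (ts : List PTree) :
      (∀ t ∈ ts, t.rootLabel < a) → (∀ t ∈ ts, t.Decreasing) → PTree.Decreasing (.node a ts)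

/-- A decreasing plane tree on `{1, …, n}`. -/
def IsDPT (n : ℕ) (T : PTree) : Prop :=
  T.Decreasing ∧ T.postorder.Perm (List.range' 1 n)

/-- Exchange the labels `i` and `i+1` in a labeled plane tree. -/
def swapLabels (i : ℕ) (T : PTree) : PTree :=
  T.relabel fun x => if x = i then i + 1 else if x = i + 1 then i else x

open Function Set

theorem List.idxOf_map_of_injective {α β : Type*} [DecidableEq α] [DecidableEq β]
    {f : α → β} (hf : Injective f) (a : α) (l : List α) :
    (l.map f).idxOf (f a) = l.idxOf a := by
  induction l with
  | nil => rfl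
  | cons b l ih =>
    by_cases h : b = a
    · simp [h]
    · rw [List.map_cons, List.idxOf_cons_ne _ (hf.ne h), List.idxOf_cons_ne _ h, ih]

theorem List.idxOf_append_lt_length_iff {α : Type*} [DecidableEq α] {l₁ l₂ : List α} {a : α} :
    (l₁ ++ l₂).idxOf a < l₁.length ↔ a ∈ l₁ := by
  by_cases h : a ∈ l₁
  · simp [List.idxOf_append_of_mem h, List.idxOf_lt_length_iff.2 h, h]
  · simp [List.idxOf_append_of_notMem h, h]

theorem List.mem_of_idxOf_between {α : Type*} [DecidableEq α] {l Q : List α} {b c x : α}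
    (hl : l.Nodup) (hQ : Q ++ [b] <:+: l) (hc : c ∈ Q)
    (hx₁ : min (l.idxOf c) (l.idxOf b) < l.idxOf x)
    (hx₂ : l.idxOf x < max (l.idxOf c) (l.idxOf b)) : x ∈ Q := by
  obtain ⟨A, B, rfl⟩ := hQ
  have hl' : (A ++ Q ++ b :: B).Nodup := by simpa using hl
  rw [show A ++ (Q ++ [b]) ++ B = A ++ Q ++ b :: B by simp] at hx₁ hx₂
  have hcA : c ∉ A := fun hcA =>
    List.disjoint_of_nodup_append (by simpa using hl) hcA (List.mem_append_left _ hc)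
  have hbAQ : b ∉ A ++ Q := fun hb => List.disjoint_of_nodup_append hl' hb List.mem_cons_self
  have hidx_b : (A ++ Q ++ b :: B).idxOf b = A.length + Q.length := by
    rw [List.idxOf_append_of_notMem hbAQ, List.idxOf_cons_self, List.length_append]; rfl
  have hidx_c : (A ++ Q ++ b :: B).idxOf c = A.length + Q.idxOf c := by
    rw [List.idxOf_append_of_mem (List.mem_append_right _ hc), List.idxOf_append_of_notMem hcA]
  have hcQ := List.idxOf_lt_length_iff.2 hc
  have hxAQ : x ∈ A ++ Q := by
    apply (List.idxOf_append_lt_length_iff (l₂ := b :: B)).1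
    rw [List.length_append]; omega
  have hxA : x ∉ A := fun hxA => by
    rw [List.idxOf_append_of_mem hxAQ, List.idxOf_append_of_mem hxA] at hx₁
    have := List.idxOf_lt_length_iff.2 hxA
    omega
  simpa [hxA] using hxAQ

theorem List.map_swap_perm {α : Type*} [DecidableEq α] {l : List α} {a b : α} (hl : l.Nodup)
    (ha : a ∈ l) (hb : b ∈ l) : (l.map (Equiv.swap a b)).Perm l := by
  have hswap : ∀ x ∈ l, Equiv.swap a b x ∈ l := fun x hx => by
    rw [Equiv.swap_apply_def]; split_ifs <;> assumption
  refine (List.perm_ext_iff_of_nodup (hl.map (Equiv.injective _)) hl).2 fun y => ⟨?_, ?_⟩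
  · intro hy
    obtain ⟨x, hx, rfl⟩ := List.mem_map.1 hy
    exact hswap x hx
  · exact fun hy => List.mem_map.2 ⟨_, hswap y hy, Equiv.swap_apply_self _ _ _⟩

namespace PTree

@[induction_eliminator]
theorem induction {motive : PTree → Prop}
    (node : ∀ a ts, (∀ t ∈ ts, motive t) → motive (.node a ts)) : ∀ T, motive T
  | .node a ts => node a ts fun t _ => induction node t

@[simp]
theorem postorder_node (a : ℕ) (ts : List PTree) :
    (node a ts).postorder = (ts.map postorder).flatten ++ [a] := by
  rw [postorder]; simp

@[simp]
theorem shape_node (a : ℕ) (ts : List PTree) : (node a ts).shape = .node (ts.map shape) := by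
  rw [shape]; simp

@[simp]
theorem relabel_node (f : ℕ → ℕ) (a : ℕ) (ts : List PTree) :
    (node a ts).relabel f = node (f a) (ts.map (relabel f)) := by
  rw [relabel]; simp

@[simp]
theorem rootLabel_node (a : ℕ) (ts : List PTree) : (node a ts).rootLabel = a := rfl

theorem rootLabel_relabel (f : ℕ → ℕ) (T : PTree) : (T.relabel f).rootLabel = f T.rootLabel := by
  cases T; simp

theorem postorder_relabel (f : ℕ → ℕ) (T : PTree) :
    (T.relabel f).postorder = T.postorder.map f := by
  induction T with
  | node a ts ih =>
    simp only [relabel_node, postorder_node, List.map_append, List.map_flatten, List.map_map]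
    exact congrArg (· ++ [f a]) (congrArg List.flatten (List.map_congr_left ih))

theorem shape_relabel (f : ℕ → ℕ) (T : PTree) : (T.relabel f).shape = T.shape := by
  induction T with
  | node a ts ih => simpa using ih

theorem relabel_relabel (f g : ℕ → ℕ) (T : PTree) :
    (T.relabel g).relabel f = T.relabel (f ∘ g) := by
  induction T with
  | node a ts ih => simpa using ih

theorem relabel_id (T : PTree) : T.relabel id = T := by
  induction T with
  | node a ts ih => simp [List.map_congr_left ih]

theorem postorder_infix_of_mem {a : ℕ} {t : PTree} {ts : List PTree} (ht : t ∈ ts) :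
    t.postorder <:+: (node a ts).postorder := by
  rw [postorder_node]
  exact (List.infix_of_mem_flatten (List.mem_map_of_mem ht)).trans
    (List.prefix_append _ _).isInfix

inductive HasEdge : PTree → ℕ → ℕ → Prop
  | root (a : ℕ) {t : PTree} {ts : List PTree} : t ∈ ts → HasEdge (node a ts) a t.rootLabel
  | sub (a : ℕ) {t : PTree} {ts : List PTree} {p c : ℕ} :
      t ∈ ts → HasEdge t p c → HasEdge (node a ts) p c

theorem root_mem_postorder (T : PTree) : T.rootLabel ∈ T.postorder := by
  cases T; simp

namespace Decreasing

theorem le_rootLabel {T : PTree} (hT : T.Decreasing) {x : ℕ} (hx : x ∈ T.postorder) :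
    x ≤ T.rootLabel := by
  induction hT with
  | node a ts hlt _ ih =>
    simp only [postorder_node, List.mem_append, List.mem_flatten, List.mem_map,
      List.mem_singleton] at hx
    obtain ⟨_, ⟨t, ht, rfl⟩, hxt⟩ | rfl := hx
    · exact ((ih t ht hxt).trans_lt (hlt t ht)).le
    · rfl

theorem lt_of_hasEdge {T : PTree} (hT : T.Decreasing) {p c : ℕ} (h : T.HasEdge p c) : c < p := by
  induction h with
  | root a ht => cases hT with | node _ _ hlt _ => exact hlt _ ht
  | sub a ht _ ih => cases hT with | node _ _ _ hdec => exact ih (hdec _ ht)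

theorem relabel {T : PTree} (hT : T.Decreasing) {f : ℕ → ℕ}
    (hf : ∀ p c, T.HasEdge p c → f c < f p) : (T.relabel f).Decreasing := by
  induction hT with
  | node a ts _ _ ih =>
    rw [relabel_node]
    refine .node _ _ ?_ ?_ <;> simp only [List.mem_map] <;> rintro _ ⟨t, ht, rfl⟩
    · rw [rootLabel_relabel]; exact hf _ _ (.root a ht)
    · exact ih t ht fun p c h => hf p c (.sub a ht h)

/-- `Q` is the postorder reading of the subtree rooted at `p` with the root removed. -/
theorem exists_infix_of_hasEdge {T : PTree} (hT : T.Decreasing) {p c : ℕ} (h : T.HasEdge p c) :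
    ∃ Q, Q ++ [p] <:+: T.postorder ∧ c ∈ Q ∧ ∀ x ∈ Q, x < p := by
  induction h with
  | @root a t ts ht =>
    cases hT with
    | node _ _ hlt hdec =>
      refine ⟨(ts.map postorder).flatten, by simp, ?_, ?_⟩
      · exact List.mem_flatten.2 ⟨_, List.mem_map_of_mem ht, root_mem_postorder t⟩
      · simp only [List.mem_flatten, List.mem_map]
        rintro x ⟨_, ⟨s, hs, rfl⟩, hxs⟩
        exact ((hdec s hs).le_rootLabel hxs).trans_lt (hlt s hs)
  | sub a ht _ ih =>
    cases hT with
    | node _ _ _ hdec =>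
      obtain ⟨Q, hQ, hcQ, hlt⟩ := ih (hdec _ ht)
      exact ⟨Q, hQ.trans (postorder_infix_of_mem ht), hcQ, hlt⟩

end Decreasing

end PTree

theorem swapEntries_eq_map (i : ℕ) (l : List ℕ) :
    swapEntries i l = l.map (Equiv.swap i (i + 1)) :=
  rfl

theorem swapLabels_eq_relabel (i : ℕ) (T : PTree) :
    swapLabels i T = T.relabel (Equiv.swap i (i + 1)) :=
  rfl

theorem swapLabels_swapLabels (i : ℕ) (T : PTree) : swapLabels i (swapLabels i T) = T := by
  simp only [swapLabels_eq_relabel, PTree.relabel_relabel, ← Equiv.Perm.coe_mul,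
    Equiv.swap_mul_self, Equiv.Perm.coe_one, PTree.relabel_id]

theorem swapEntries_swapEntries (i : ℕ) (l : List ℕ) : swapEntries i (swapEntries i l) = l := by
  simp [swapEntries_eq_map, Function.comp_def]

theorem postorder_swapLabels (i : ℕ) (T : PTree) :
    (swapLabels i T).postorder = swapEntries i T.postorder := by
  rw [swapLabels_eq_relabel, PTree.postorder_relabel, swapEntries_eq_map]

theorem IsPermList.swapEntries {n i : ℕ} (hi₁ : 1 ≤ i) (hi₂ : i + 1 ≤ n) {π : List ℕ}
    (hπ : IsPermList n π) : IsPermList n (swapEntries i π) := by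
  rw [IsPermList, swapEntries_eq_map]
  exact (hπ.map _).trans (List.map_swap_perm List.nodup_range'
    (List.mem_range'_1.2 ⟨hi₁, by omega⟩) (List.mem_range'_1.2 ⟨by omega, by omega⟩))

theorem toggleApplies_swapEntries {i : ℕ} {π : List ℕ} (h : ToggleApplies i π) :
    ToggleApplies i (swapEntries i π) := by
  obtain ⟨a, haπ, hlt, h₁, h₂⟩ := h
  have hidx := List.idxOf_map_of_injective (Equiv.swap i (i + 1)).injective (l := π)
  have ha' : Equiv.swap i (i + 1) a = a := Equiv.swap_apply_of_ne_of_ne (by omega) (by omega)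
  have hi := hidx i
  have hi' := hidx (i + 1)
  have ha := hidx a
  rw [Equiv.swap_apply_left] at hi
  rw [Equiv.swap_apply_right] at hi'
  rw [ha'] at ha
  rw [swapEntries_eq_map]
  refine ⟨a, ha' ▸ List.mem_map_of_mem haπ, hlt, ?_, ?_⟩ <;> rw [hi, hi', ha]
  · rwa [min_comm]
  · rwa [max_comm]

theorem not_hasEdge_of_toggleApplies {i : ℕ} {T : PTree} (hT : T.Decreasing)
    (hnd : T.postorder.Nodup) (h : ToggleApplies i T.postorder) : ¬ T.HasEdge (i + 1) i := by
  intro he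
  obtain ⟨Q, hQ, hiQ, hlt⟩ := hT.exists_infix_of_hasEdge he
  obtain ⟨a, -, ha, h₁, h₂⟩ := h
  exact (hlt a (List.mem_of_idxOf_between hnd hQ hiQ h₁ h₂)).not_gt ha

theorem PTree.Decreasing.swapLabels {i : ℕ} {T : PTree} (hT : T.Decreasing)
    (hnd : T.postorder.Nodup) (h : ToggleApplies i T.postorder) :
    (swapLabels i T).Decreasing := by
  rw [swapLabels_eq_relabel]
  refine hT.relabel fun p c he => ?_
  have hcp := hT.lt_of_hasEdge he
  have hne : ¬ (p = i + 1 ∧ c = i) := fun ⟨hp, hc⟩ =>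
    not_hasEdge_of_toggleApplies hT hnd h (hp ▸ hc ▸ he)
  simp only [Equiv.swap_apply_def]
  split_ifs <;> omega

theorem swapLabels_mapsTo {n i : ℕ} (hi₁ : 1 ≤ i) (hi₂ : i + 1 ≤ n) {π : List ℕ}
    (hπ : IsPermList n π) (h : ToggleApplies i π) :
    MapsTo (swapLabels i) {T | IsDPT n T ∧ T.postorder = π}
      {T | IsDPT n T ∧ T.postorder = swapEntries i π} := by
  rintro T ⟨⟨hT, -⟩, rfl⟩
  refine ⟨⟨hT.swapLabels (hπ.nodup_iff.2 (List.nodup_range' ..)) h, ?_⟩, ?_⟩ <;>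
    rw [postorder_swapLabels]
  exact hπ.swapEntries hi₁ hi₂

/-- If `π' = swapᵢ(π)` and an entry larger than `i+1` lies between `i` and `i+1` in `π`,
then swapping the labels `i` and `i+1` is a bijection from `𝒫⁻¹(π)` onto `𝒫⁻¹(π')`
(postorder preimages among decreasing plane trees on `{1, …, n}`), and this bijection
preserves skeletons. -/
theorem postorder_preimage_bijOn (n i : ℕ) (hi₁ : 1 ≤ i) (hi₂ : i ≤ n - 1)
    (π π' : List ℕ) (hπ : IsPermList n π) (hπ' : π' = swapEntries i π)
    (h : ToggleApplies i π) :
    Set.BijOn (swapLabels i) {T : PTree | IsDPT n T ∧ T.postorder = π}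
        {T : PTree | IsDPT n T ∧ T.postorder = π'} ∧
      ∀ T : PTree, IsDPT n T → T.postorder = π → (swapLabels i T).shape = T.shape := by
  have hi : i + 1 ≤ n := by omega
  have hπ'_perm : IsPermList n π' := hπ' ▸ hπ.swapEntries hi₁ hi
  have h' : ToggleApplies i π' := hπ' ▸ toggleApplies_swapEntries h
  have hback : swapEntries i π' = π := hπ' ▸ swapEntries_swapEntries i π
  have hinv : InvOn (swapLabels i) (swapLabels i) {T | IsDPT n T ∧ T.postorder = π'}
      {T | IsDPT n T ∧ T.postorder = π} :=
    ⟨fun T _ => swapLabels_swapLabels i T, fun T _ => swapLabels_swapLabels i T⟩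
  refine ⟨hinv.symm.bijOn (hπ' ▸ swapLabels_mapsTo hi₁ hi hπ h)
    (hback ▸ swapLabels_mapsTo hi₁ hi hπ'_perm h'), fun T _ _ => ?_⟩
  rw [swapLabels_eq_relabel, PTree.shape_relabel]
end

section
/- If π, π' ∈ S_n are sorted permutations (i.e., have nonempty stack-sorting preimage) with the same skeleton, then the canonical preimages of π and π' have the same skeleton. -/
lemma max_getD_mem (l : List ℕ) (h : l ≠ []) : l.max?.getD 0 ∈ l := by
  rcases hm : l.max? with _ | m'
  · exact absurd (List.max?_eq_none_iff.mp hm) h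
  · simpa using List.max?_mem hm

lemma length_takeWhile_lt (p : ℕ → Bool) (l : List ℕ) (x : ℕ) (hx : x ∈ l) (hpx : p x = false) :
    (l.takeWhile p).length < l.length := by
  rcases Nat.lt_or_ge (l.takeWhile p).length l.length with h | h
  · exact h
  · have := List.takeWhile_eq_self_iff.mp ((List.takeWhile_sublist p).eq_of_length_le h) x hx
    rw [hpx] at this; exact absurd this (by simp)

lemma length_dropWhile_tail_lt (p : ℕ → Bool) (l : List ℕ) (h : l ≠ []) :
    ((l.dropWhile p).tail).length < l.length := by
  have h1 : (l.dropWhile p).length ≤ l.length := (List.dropWhile_sublist _).length_le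
  have h2 : ((l.dropWhile p).tail).length ≤ (l.dropWhile p).length - 1 := by
    simp [List.length_tail]
  have : 0 < l.length := List.length_pos_iff.mpr h
  omega

/-- West's stack-sorting map `s`: `s([]) = []` and `s(LmR) = s(L) s(R) m`,
where `m` is the largest entry. -/
def stackSort : List ℕ → List ℕ
  | [] => []
  | a :: rest =>
    stackSort ((a :: rest).takeWhile (· ≠ (a :: rest).max?.getD 0)) ++
      stackSort (((a :: rest).dropWhile (· ≠ (a :: rest).max?.getD 0)).tail) ++
      [(a :: rest).max?.getD 0]
termination_by l => l.length
decreasing_by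
  · exact length_takeWhile_lt _ _ _ (max_getD_mem (a :: rest) (by simp)) (by simp)
  · exact length_dropWhile_tail_lt _ _ (by simp)

/-- The inverse of the permutation `l` of `{1, …, n}`, as a word: its `k`-th entry is the
position (1-indexed) of the entry `k` in `l`. -/
def invw (l : List ℕ) : List ℕ := (List.range' 1 l.length).map fun k => l.idxOf k + 1

/-- The composition `l · m` of permutations written as words: `(l · m) j = l (m j)`. -/
def compw (l m : List ℕ) : List ℕ := m.map fun k => l.getD (k - 1) 0

/-- The group element `π⁻¹ · s(π)`, which encodes the skeleton of `π`: two permutations of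
`{1, …, n}` have the same skeleton if and only if their `skel`s coincide. -/
def skel (l : List ℕ) : List ℕ := compw (invw l) (stackSort l)

/-- Binary plane trees with vertices labeled by natural numbers. -/
inductive BTree where
  | leaf : BTree
  | node : BTree → ℕ → BTree → BTree

/-- The in-order reading of a labeled binary plane tree. -/
def BTree.inorder : BTree → List ℕ
  | .leaf => []
  | .node L a R => L.inorder ++ a :: R.inorder

/-- A decreasing binary plane tree: every child's label is smaller than its parent's. -/
inductive BTree.Decreasing : BTree → Prop
  | leaf : BTree.Decreasing .leaf
  | node (L : BTree) (a : ℕ) (R : BTree) :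
      L.Decreasing → R.Decreasing →
      (∀ LL b LR, L = .node LL b LR → b < a) →
      (∀ RL b RR, R = .node RL b RR → b < a) →
      BTree.Decreasing (.node L a R)

/-- Bousquet-Mélou's canonical trees: every vertex having a left child has a nonempty
right subtree whose in-order reading begins with an entry smaller than the label of the
left child. -/
inductive BTree.Canonical : BTree → Prop
  | leaf : BTree.Canonical .leaf
  | node (L : BTree) (a : ℕ) (R : BTree) :
      L.Canonical → R.Canonical →
      (∀ LL b LR, L = .node LL b LR → ∃ c, R.inorder.head? = some c ∧ c < b) →
      BTree.Canonical (.node L a R)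

/-- A permutation is canonical if its decreasing binary plane tree (under the in-order
bijection) is canonical. -/
def CanonicalPerm (σ : List ℕ) : Prop :=
  ∃ T : BTree, T.Decreasing ∧ T.inorder = σ ∧ T.Canonical

/-!
The skeleton of a permutation records exactly the shape of its decreasing binary tree: it lists
the in-order positions of the vertices read in postorder. If `σ` is the in-order reading of a
decreasing tree `T`, then `s(σ)` is the postorder reading of `T`, so it suffices to recover the
shape of a canonical `T` from the shape of the decreasing tree `U` of its postorder reading.

This works more generally for canonical forests: sequences of nonempty canonical trees, each
beginning (in order) below the root of its predecessor, read one after the other in postorder.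
The root of `U` is the largest entry, the root of some tree `node L m R` of the forest. The left
subtree of `U` is the decreasing tree of the forest in which `node L m R` is replaced by its
nonempty subtrees, and the right subtree is that of the trees following it. The canonical
conditions force `L` to be nonempty when trees precede it, and `R` to be nonempty when `L` is, so
the shapes of the preceding trees, of `L` and of `R` are read off from the shapes recovered, by
induction, from the left subtree of `U`.
-/

open List

theorem stackSort_append_cons_of_forall_lt {l₁ l₂ : List ℕ} {m : ℕ}
    (h : ∀ x ∈ l₁ ++ l₂, x < m) :
    stackSort (l₁ ++ m :: l₂) = stackSort l₁ ++ stackSort l₂ ++ [m] := by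
  have hmax : (l₁ ++ m :: l₂).max? = some m :=
    max?_eq_some_iff.mpr ⟨by simp, fun x hx => by
      rcases mem_append.mp hx with hx | hx | ⟨_, hx⟩
      exacts [(h x (mem_append_left _ hx)).le, le_rfl, (h x (mem_append_right _ hx)).le]⟩
  have hne : ∀ x ∈ l₁, (!decide (x = m)) = true := fun x hx => by
    simpa using (h x (mem_append_left _ hx)).ne
  obtain ⟨a, rest, hl⟩ : ∃ a rest, l₁ ++ m :: l₂ = a :: rest :=
    ⟨_, _, (cons_head_tail (by simp)).symm⟩
  rw [hl, stackSort, ← hl, hmax]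
  simp [takeWhile_append_of_pos hne, dropWhile_append_of_pos hne]

namespace BTree

def postorder : BTree → List ℕ
  | .leaf => []
  | .node L a R => L.postorder ++ R.postorder ++ [a]

def rootD : BTree → ℕ
  | .leaf => 0
  | .node _ a _ => a

def size : BTree → ℕ
  | .leaf => 0
  | .node L _ R => L.size + R.size + 1

theorem postorder_eq_nil_iff {T : BTree} : T.postorder = [] ↔ T = .leaf := by
  cases T <;> simp [postorder]

theorem rootD_mem_postorder {T : BTree} (hT : T ≠ .leaf) : T.rootD ∈ T.postorder := by
  cases T with
  | leaf => exact absurd rfl hT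
  | node L a R => simp [rootD, postorder]

theorem postorder_perm_inorder (T : BTree) : T.postorder ~ T.inorder := by
  induction T with
  | leaf => rfl
  | node L a R ihL ihR =>
    simpa [postorder, inorder] using
      ihL.append ((ihR.append_right [a]).trans (perm_append_singleton _ _))

theorem length_inorder (T : BTree) : T.inorder.length = T.size := by
  induction T with
  | leaf => rfl
  | node L a R ihL ihR => simp [inorder, size, ihL, ihR]; omega

theorem Decreasing.le_rootD {T : BTree} (hT : T.Decreasing) :
    ∀ x ∈ T.inorder, x ≤ T.rootD := by
  induction hT with
  | leaf => simp [inorder]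
  | node L a R _ _ hLa hRa ihL ihR =>
    intro x hx
    simp only [inorder, mem_append, mem_cons] at hx
    rcases hx with hx | rfl | hx
    · cases L with
      | leaf => simp [inorder] at hx
      | node A b B => exact (ihL x hx).trans (hLa A b B rfl).le
    · exact le_rfl
    · cases R with
      | leaf => simp [inorder] at hx
      | node A b B => exact (ihR x hx).trans (hRa A b B rfl).le

theorem Decreasing.forall_lt {T : BTree} (hT : T.Decreasing) {a : ℕ}
    (h : ∀ A b B, T = .node A b B → b < a) : ∀ x ∈ T.inorder, x < a := by
  cases T with
  | leaf => simp [inorder]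
  | node A b B => exact fun x hx => (hT.le_rootD x hx).trans_lt (h A b B rfl)

theorem Decreasing.forall_lt_root {L R : BTree} {a : ℕ} (hT : (BTree.node L a R).Decreasing) :
    ∀ x ∈ L.inorder ++ R.inorder, x < a := by
  cases hT with
  | node _ _ _ hL hR hLa hRa =>
    intro x hx
    rcases mem_append.mp hx with hx | hx
    exacts [hL.forall_lt hLa x hx, hR.forall_lt hRa x hx]

theorem decreasing_node_of_forall_lt {L R : BTree} {a : ℕ} (hL : L.Decreasing)
    (hR : R.Decreasing) (h : ∀ x ∈ L.inorder ++ R.inorder, x < a) :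
    (BTree.node L a R).Decreasing :=
  .node L a R hL hR (fun A b B hA => h b (by simp [hA, inorder]))
    (fun A b B hB => h b (by simp [hB, inorder]))

theorem Decreasing.stackSort_inorder {T : BTree} (hT : T.Decreasing) :
    stackSort T.inorder = T.postorder := by
  induction hT with
  | leaf => simp [inorder, postorder, stackSort]
  | node L a R hL hR hLa hRa ihL ihR =>
    rw [inorder, stackSort_append_cons_of_forall_lt
      (Decreasing.node L a R hL hR hLa hRa).forall_lt_root, ihL, ihR, postorder]

theorem exists_decreasing_inorder_eq {l : List ℕ} (hl : l.Nodup) :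
    ∃ T : BTree, T.Decreasing ∧ T.inorder = l := by
  induction h : l.length using Nat.strong_induction_on generalizing l with
  | _ k ih =>
    rcases eq_or_ne l [] with rfl | hne
    · exact ⟨.leaf, .leaf, rfl⟩
    obtain ⟨m, hm⟩ : ∃ m, l.max? = some m := Option.isSome_iff_exists.mp (by simpa using hne)
    obtain ⟨hmem, hle⟩ := max?_eq_some_iff.mp hm
    obtain ⟨s, t, rfl⟩ := append_of_mem hmem
    obtain ⟨hs, ⟨hmt, ht⟩, hst⟩ := by simpa only [nodup_append', nodup_cons] using hl
    have hlt : ∀ x ∈ s ++ t, x < m := fun x hx => by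
      rcases mem_append.mp hx with hx | hx
      · exact (hle x (by simp [hx])).lt_of_ne fun he => hst (he ▸ hx) mem_cons_self
      · exact (hle x (by simp [hx])).lt_of_ne fun he => hmt (he ▸ hx)
    obtain ⟨L, hL, rfl⟩ := ih s.length (by simp [← h]) hs rfl
    obtain ⟨R, hR, rfl⟩ := ih t.length (by simp [← h]; omega) ht rfl
    exact ⟨.node L m R, decreasing_node_of_forall_lt hL hR hlt, rfl⟩

def posList : BTree → List ℕ
  | .leaf => []
  | .node L _ R => L.posList ++ R.posList.map (· + (L.size + 1)) ++ [L.size]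

def shape : BTree → BTree
  | .leaf => .leaf
  | .node L _ R => .node L.shape 0 R.shape

theorem size_shape (T : BTree) : T.shape.size = T.size := by
  induction T with
  | leaf => rfl
  | node L a R ihL ihR => simp [shape, size, ihL, ihR]

theorem posList_shape (T : BTree) : T.shape.posList = T.posList := by
  induction T with
  | leaf => rfl
  | node L a R ihL ihR => simp [shape, posList, ihL, ihR, size_shape]

theorem length_posList (T : BTree) : T.posList.length = T.size := by
  induction T with
  | leaf => rfl
  | node L a R ihL ihR => simp [posList, size, ihL, ihR]; omega

theorem shape_eq_of_posList_eq {T T' : BTree} (h : T.posList = T'.posList) :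
    T.shape = T'.shape := by
  induction T generalizing T' with
  | leaf => cases T' <;> simp_all [posList, shape]
  | node L a R ihL ihR =>
    cases T' with
    | leaf => simp [posList] at h
    | node L' a' R' =>
      obtain ⟨hLR, hsize⟩ := append_inj' h rfl
      obtain ⟨hL, hR⟩ := append_inj hLR (by simp [length_posList, ← singleton_inj.mp hsize])
      rw [singleton_inj.mp hsize] at hR
      simp [shape, ihL hL, ihR (map_injective_iff.mpr (add_left_injective _) hR)]

theorem postorder_map_idxOf {T : BTree} (h : T.inorder.Nodup) :
    T.postorder.map T.inorder.idxOf = T.posList := by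
  induction T with
  | leaf => rfl
  | node L a R ihL ihR =>
    have hnd : (L.inorder ++ a :: R.inorder).Nodup := h
    obtain ⟨hL, ⟨haR, hR⟩, hdisj⟩ := by simpa only [nodup_append', nodup_cons] using hnd
    have hLidx : ∀ k ∈ L.postorder, (L.inorder ++ a :: R.inorder).idxOf k = L.inorder.idxOf k :=
      fun k hk => idxOf_append_of_mem ((postorder_perm_inorder L).subset hk)
    have hRidx : ∀ k ∈ R.postorder,
        (L.inorder ++ a :: R.inorder).idxOf k = R.inorder.idxOf k + (L.size + 1) := by
      intro k hk
      have hkR := (postorder_perm_inorder R).subset hk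
      have hka : a ≠ k := fun e => haR (e ▸ hkR)
      rw [idxOf_append_of_notMem fun hkL => hdisj hkL (mem_cons_of_mem a hkR),
        idxOf_cons_ne _ hka, length_inorder]
      omega
    have haidx : (L.inorder ++ a :: R.inorder).idxOf a = L.size := by
      rw [idxOf_append_of_notMem fun haL => hdisj haL mem_cons_self, idxOf_cons_self,
        length_inorder, add_zero]
    simp only [inorder, postorder, posList, map_append, map_cons, map_nil, haidx,
      ← ihL hL, ← ihR hR, map_map]
    rw [map_congr_left hLidx, map_congr_left hRidx]
    rfl

end BTree

theorem IsPermList.nodup {n : ℕ} {l : List ℕ} (h : IsPermList n l) : l.Nodup :=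
  h.nodup_iff.mpr (nodup_range' ..)

theorem skel_eq_map_idxOf {l : List ℕ} (h : ∀ k ∈ stackSort l, 1 ≤ k ∧ k ≤ l.length) :
    skel l = (stackSort l).map (l.idxOf · + 1) := by
  refine map_congr_left fun k hk => ?_
  obtain ⟨h1, h2⟩ := h k hk
  simp [invw, show k - 1 < l.length by omega, show 1 + (k - 1) = k by omega]

theorem BTree.Decreasing.skel_inorder {n : ℕ} {T : BTree} (hT : T.Decreasing)
    (hn : IsPermList n T.inorder) : skel T.inorder = T.posList.map (· + 1) := by
  have hbound : ∀ k ∈ stackSort T.inorder, 1 ≤ k ∧ k ≤ T.inorder.length := fun k hk => by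
    rw [hT.stackSort_inorder] at hk
    have := mem_range'_1.mp (hn.subset ((BTree.postorder_perm_inorder T).subset hk))
    rw [hn.length_eq, length_range']
    omega
  rw [skel_eq_map_idxOf hbound, hT.stackSort_inorder, ← BTree.postorder_map_idxOf hn.nodup,
    map_map]
  rfl

theorem BTree.Decreasing.skel_inorder_eq_iff {n n' : ℕ} {T T' : BTree} (hT : T.Decreasing)
    (hT' : T'.Decreasing) (hn : IsPermList n T.inorder) (hn' : IsPermList n' T'.inorder) :
    skel T.inorder = skel T'.inorder ↔ T.shape = T'.shape := by
  rw [hT.skel_inorder hn, hT'.skel_inorder hn',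
    (map_injective_iff.mpr (add_left_injective 1)).eq_iff]
  exact ⟨shape_eq_of_posList_eq, fun h => by rw [← posList_shape, h, posList_shape]⟩

namespace BTree

def toForest : BTree → List BTree
  | .leaf => []
  | .node L a R => [.node L a R]

def LinksTo (S S' : BTree) : Prop := ∃ c, S'.inorder.head? = some c ∧ c < S.rootD

theorem Canonical.linksTo {L R : BTree} {a : ℕ} (h : (BTree.node L a R).Canonical)
    (hL : L ≠ .leaf) : L.LinksTo R := by
  cases h with
  | node _ _ _ _ _ hLR =>
    cases L with
    | leaf => exact absurd rfl hL
    | node A b B => exact hLR A b B rfl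

theorem LinksTo.ne_leaf {S S' : BTree} (h : S.LinksTo S') : S' ≠ .leaf := by
  rintro rfl
  simp [LinksTo, inorder] at h

theorem LinksTo.of_head?_eq {S S' S'' : BTree} (h : S.LinksTo S')
    (he : S''.inorder.head? = S'.inorder.head?) : S.LinksTo S'' := by
  rwa [LinksTo, he]

theorem map_shape_toForest (T : BTree) : T.toForest.map shape = T.shape.toForest := by
  cases T <;> rfl

theorem toForest_injective : Function.Injective toForest := by
  intro T T' h
  cases T <;> cases T' <;> simp_all [toForest]

end BTree

open BTree

def forestPostorder (F : List BTree) : List ℕ := F.flatMap postorder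

theorem flatMap_postorder_toForest (T : BTree) : T.toForest.flatMap postorder = T.postorder := by
  cases T <;> simp [toForest, postorder]

structure CanonicalForest (F : List BTree) : Prop where
  ne_leaf : ∀ S ∈ F, S ≠ .leaf
  decreasing : ∀ S ∈ F, S.Decreasing
  canonical : ∀ S ∈ F, S.Canonical
  chain : F.IsChain LinksTo

namespace CanonicalForest

theorem of_isInfix {F F' : List BTree} (h : CanonicalForest F) (hF' : F' <:+: F) :
    CanonicalForest F' :=
  ⟨fun S hS => h.ne_leaf S (hF'.subset hS), fun S hS => h.decreasing S (hF'.subset hS),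
    fun S hS => h.canonical S (hF'.subset hS), h.chain.infix hF'⟩

theorem append {F₁ F₂ : List BTree} (h₁ : CanonicalForest F₁) (h₂ : CanonicalForest F₂)
    (hlink : ∀ S ∈ F₁.getLast?, ∀ S' ∈ F₂.head?, S.LinksTo S') :
    CanonicalForest (F₁ ++ F₂) := by
  refine ⟨?_, ?_, ?_, h₁.chain.append h₂.chain hlink⟩ <;> intro S hS <;>
    rcases mem_append.mp hS with hS | hS
  exacts [h₁.ne_leaf S hS, h₂.ne_leaf S hS, h₁.decreasing S hS, h₂.decreasing S hS,
    h₁.canonical S hS, h₂.canonical S hS]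

theorem toForest {T : BTree} (hd : T.Decreasing) (hc : T.Canonical) :
    CanonicalForest T.toForest := by
  cases T with
  | leaf => exact ⟨nofun, nofun, nofun, .nil⟩
  | node L a R =>
    exact ⟨by simp [BTree.toForest], by simpa [BTree.toForest] using hd,
      by simpa [BTree.toForest] using hc, .singleton _⟩

theorem children {L R : BTree} {a : ℕ} (hd : (BTree.node L a R).Decreasing)
    (hc : (BTree.node L a R).Canonical) : CanonicalForest (L.toForest ++ R.toForest) := by
  obtain ⟨hLd, hRd⟩ : L.Decreasing ∧ R.Decreasing := by cases hd; exact ⟨‹_›, ‹_›⟩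
  obtain ⟨hLc, hRc⟩ : L.Canonical ∧ R.Canonical := by cases hc; exact ⟨‹_›, ‹_›⟩
  refine (toForest hLd hLc).append (toForest hRd hRc) fun S hS S' hS' => ?_
  cases L with
  | leaf => simp [BTree.toForest] at hS
  | node A b B =>
    cases R with
    | leaf => simp [BTree.toForest] at hS'
    | node C d D =>
      simp only [BTree.toForest, getLast?_singleton, head?_cons, Option.mem_def,
        Option.some.injEq] at hS hS'
      exact hS ▸ hS' ▸ hc.linksTo nofun

variable {F₁ F₂ : List BTree} {L R : BTree} {m : ℕ}

theorem eq_nil_of_left_eq_leaf (hF : CanonicalForest (F₁ ++ .node L m R :: F₂))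
    (hle : ∀ x ∈ forestPostorder (F₁ ++ .node L m R :: F₂), x ≤ m) (hL : L = .leaf) :
    F₁ = [] := by
  subst hL
  by_contra hF₁
  set P := F₁.getLast hF₁
  have hP : P ∈ F₁ := getLast_mem hF₁
  obtain ⟨c, hc, hlt⟩ : P.LinksTo (.node .leaf m R) :=
    hF.chain.rel_getLast_head_of_append hF₁ (cons_ne_nil _ _)
  obtain rfl : m = c := by simpa [inorder] using hc
  have hPm : P.rootD ≤ m :=
    hle _ (mem_flatMap.mpr ⟨P, by simp [hP], rootD_mem_postorder (hF.ne_leaf P (by simp [hP]))⟩)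
  omega

theorem replace_node (hF : CanonicalForest (F₁ ++ .node L m R :: F₂))
    (hL : L = .leaf → F₁ = []) :
    CanonicalForest (F₁ ++ L.toForest ++ R.toForest) := by
  have hS : BTree.node L m R ∈ F₁ ++ .node L m R :: F₂ := by simp
  rw [append_assoc]
  refine (hF.of_isInfix (prefix_append _ _).isInfix).append
    (children (hF.decreasing _ hS) (hF.canonical _ hS)) fun P hP S' hS' => ?_
  have hlink : P.LinksTo (.node L m R) := (isChain_append.mp hF.chain).2.2 P hP _ rfl
  cases L with
  | leaf => simp [hL rfl] at hP
  | node A a B =>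
    obtain rfl : BTree.node A a B = S' := by simpa [BTree.toForest] using hS'
    exact hlink.of_head?_eq (by simp [inorder])

end CanonicalForest

theorem exists_eq_append_node_cons {F : List BTree} (hF : ∀ S ∈ F, S.Decreasing) {m : ℕ}
    (hm : m ∈ forestPostorder F) (hle : ∀ x ∈ forestPostorder F, x ≤ m) :
    ∃ F₁ L R F₂, F = F₁ ++ .node L m R :: F₂ := by
  obtain ⟨S, hSF, hmS⟩ := mem_flatMap.mp hm
  cases S with
  | leaf => simp [postorder] at hmS
  | node L b R =>
    have hmb : m ≤ b := (hF _ hSF).le_rootD m ((postorder_perm_inorder _).subset hmS)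
    have hbm : b ≤ m := hle b (mem_flatMap.mpr ⟨_, hSF, by simp [postorder]⟩)
    obtain ⟨F₁, F₂, rfl⟩ := append_of_mem hSF
    exact ⟨F₁, L, R, F₂, by rw [le_antisymm hbm hmb]⟩

def splitLastTwo : List BTree → List BTree × BTree × BTree
  | [] => ([], .leaf, .leaf)
  | [R] => ([], .leaf, R)
  | [L, R] => ([], L, R)
  | S :: L :: R :: F => Prod.map (S :: ·) id (splitLastTwo (L :: R :: F))

theorem splitLastTwo_append_pair (F : List BTree) (L R : BTree) :
    splitLastTwo (F ++ [L, R]) = (F, L, R) := by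
  induction F with
  | nil => rfl
  | cons S F ih =>
    rcases F with _ | ⟨A, _ | ⟨B, F⟩⟩ <;> simp_all [splitLastTwo]

theorem splitLastTwo_map_shape {F : List BTree} {L R : BTree} (hF : L = .leaf → F = [])
    (hLR : L ≠ .leaf → R ≠ .leaf) :
    splitLastTwo ((F ++ L.toForest ++ R.toForest).map shape) = (F.map shape, L.shape, R.shape) := by
  cases L with
  | leaf => cases R <;> simp [hF rfl, toForest, splitLastTwo, shape]
  | node A a B =>
    cases R with
    | leaf => exact absurd rfl (hLR nofun)
    | node C c D => simpa [toForest] using splitLastTwo_append_pair (F.map shape) _ _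

def BTree.forestShape : BTree → List BTree
  | .leaf => []
  | .node L _ R =>
    match splitLastTwo L.forestShape with
    | (F, A, B) => F ++ .node A 0 B :: R.forestShape

theorem BTree.forestShape_shape (T : BTree) : T.shape.forestShape = T.forestShape := by
  induction T with
  | leaf => rfl
  | node L a R ihL ihR => simp [shape, forestShape, ihL, ihR]

theorem BTree.Decreasing.forestShape_eq_map_shape {U : BTree} (hU : U.Decreasing)
    (hnd : U.inorder.Nodup) {F : List BTree} (hF : CanonicalForest F)
    (hw : U.inorder = forestPostorder F) :
    U.forestShape = F.map shape := by
  induction hU generalizing F with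
  | leaf =>
    obtain rfl : F = [] := eq_nil_iff_forall_not_mem.mpr fun S hS =>
      hF.ne_leaf S hS (postorder_eq_nil_iff.mp (flatMap_eq_nil_iff.mp hw.symm S hS))
    rfl
  | node UL m UR hUL hUR hULm hURm ihL ihR =>
    have hle : ∀ x ∈ forestPostorder F, x ≤ m :=
      hw ▸ (Decreasing.node UL m UR hUL hUR hULm hURm).le_rootD
    obtain ⟨F₁, L, R, F₂, rfl⟩ :=
      exists_eq_append_node_cons hF.decreasing (hw ▸ by simp [inorder]) hle
    have hL : L = .leaf → F₁ = [] := hF.eq_nil_of_left_eq_leaf hle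
    have hLR : L ≠ .leaf → R ≠ .leaf := fun h =>
      ((hF.canonical (.node L m R) (by simp)).linksTo h).ne_leaf
    have hnd' : (UL.inorder ++ m :: UR.inorder).Nodup := hnd
    obtain ⟨hndL, ⟨hmR, hndR⟩, hdisj⟩ := by
      simpa only [nodup_append', nodup_cons] using hnd'
    have hmL : m ∉ UL.inorder := fun h => hdisj h mem_cons_self
    obtain ⟨hwL, -, hwR⟩ := (append_cons_inj_of_notMem hmL hmR).mp <| show
      UL.inorder ++ m :: UR.inorder =
        forestPostorder (F₁ ++ L.toForest ++ R.toForest) ++ m :: forestPostorder F₂ by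
      simpa [forestPostorder, flatMap_postorder_toForest, inorder, postorder] using hw
    rw [forestShape, ihL hndL (hF.replace_node hL) hwL, splitLastTwo_map_shape hL hLR,
      ihR hndR (hF.of_isInfix (suffix_cons _ _ |>.trans (suffix_append _ _)).isInfix) hwR]
    simp [shape]

theorem BTree.Canonical.shape_toForest_eq_forestShape {T U : BTree} (hTc : T.Canonical)
    (hTd : T.Decreasing) (hU : U.Decreasing) (hnd : U.inorder.Nodup)
    (hUT : U.inorder = T.postorder) :
    T.shape.toForest = U.forestShape := by
  rw [← map_shape_toForest, hU.forestShape_eq_map_shape hnd (.toForest hTd hTc)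
    (by rw [hUT, forestPostorder, flatMap_postorder_toForest])]

theorem canonical_preimage_skeleton_general (n : ℕ) (π π' σ σ' : List ℕ)
    (hsk : skel π = skel π')
    (hσ : IsPermList n σ) (hσs : stackSort σ = π) (hσc : CanonicalPerm σ)
    (hσ' : IsPermList n σ') (hσs' : stackSort σ' = π') (hσc' : CanonicalPerm σ') :
    skel σ = skel σ' := by
  obtain ⟨T, hTd, rfl, hTc⟩ := hσc
  obtain ⟨T', hT'd, rfl, hT'c⟩ := hσc'
  subst hσs hσs'
  have hπ : IsPermList n T.postorder := (postorder_perm_inorder T).trans hσ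
  have hπ' : IsPermList n T'.postorder := (postorder_perm_inorder T').trans hσ'
  obtain ⟨U, hUd, hUT⟩ := exists_decreasing_inorder_eq hπ.nodup
  obtain ⟨U', hU'd, hU'T'⟩ := exists_decreasing_inorder_eq hπ'.nodup
  rw [hTd.stackSort_inorder, hT'd.stackSort_inorder, ← hUT, ← hU'T',
    hUd.skel_inorder_eq_iff hU'd (hUT ▸ hπ) (hU'T' ▸ hπ')] at hsk
  rw [hTd.skel_inorder_eq_iff hT'd hσ hσ']
  apply toForest_injective
  rw [hTc.shape_toForest_eq_forestShape hTd hUd (hUT ▸ hπ.nodup) hUT,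
    hT'c.shape_toForest_eq_forestShape hT'd hU'd (hU'T' ▸ hπ'.nodup) hU'T',
    ← forestShape_shape, hsk, forestShape_shape]

/-- If two sorted permutations `π, π' ∈ Sₙ` have the same skeleton, then their canonical
preimages have the same skeleton. -/
theorem canonical_preimage_skeleton (n : ℕ) (π π' σ σ' : List ℕ)
    (hπ : IsPermList n π) (hπ' : IsPermList n π') (hsk : skel π = skel π')
    (hσ : IsPermList n σ) (hσs : stackSort σ = π) (hσc : CanonicalPerm σ)
    (hσ' : IsPermList n σ') (hσs' : stackSort σ' = π') (hσc' : CanonicalPerm σ') :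
    skel σ = skel σ' :=
  canonical_preimage_skeleton_general n π π' σ σ' hsk hσ hσs hσc hσ' hσs' hσc'
end

section
/- The set {π⁻¹ · s(π) : π ∈ S_n} equals the set of 312-avoiding permutations in S_n, and the set {s(π)⁻¹ · π : π ∈ S_n} equals the set of 231-avoiding permutations in S_n. -/
/-- `l` contains the pattern 231. -/
def Contains231 (l : List ℕ) : Prop :=
  ∃ j₁ j₂ j₃, j₁ < j₂ ∧ j₂ < j₃ ∧ j₃ < l.length ∧
    l.getD j₃ 0 < l.getD j₁ 0 ∧ l.getD j₁ 0 < l.getD j₂ 0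

/-- `l` avoids the pattern 231. -/
def Avoids231 (l : List ℕ) : Prop := ¬ Contains231 l

/-- `l` avoids the pattern 132. -/
def Avoids132 (l : List ℕ) : Prop :=
  ¬ ∃ j₁ j₂ j₃, j₁ < j₂ ∧ j₂ < j₃ ∧ j₃ < l.length ∧
    l.getD j₁ 0 < l.getD j₃ 0 ∧ l.getD j₃ 0 < l.getD j₂ 0

/-- `l` avoids the pattern 312. -/
def Avoids312 (l : List ℕ) : Prop :=
  ¬ ∃ j₁ j₂ j₃, j₁ < j₂ ∧ j₂ < j₃ ∧ j₃ < l.length ∧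
    l.getD j₂ 0 < l.getD j₃ 0 ∧ l.getD j₃ 0 < l.getD j₁ 0

/-!
Split `π = L n R` at its largest entry. The positions of `π` are those of `L`, then `|L| + 1`,
then those of `R` shifted by `|L| + 1`; reading `s(π) = s(L) s(R) n` through them gives
`π⁻¹ · s(π) = (L⁻¹ · s(L)) (R⁻¹ · s(R) + |L| + 1) (|L| + 1)`, which avoids 312 by induction.
Conversely `s` sorts every 231-avoiding permutation (in `L n R` avoiding 231, `L` lies below `R`),
so for `σ` avoiding 312 the permutation `π = σ⁻¹` avoids 231 and `π⁻¹ · s(π) = σ`. The second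
set is the image of the first under inversion, as `s(π)⁻¹ · π = (π⁻¹ · s(π))⁻¹`, and inversion
turns 312-avoiders into 231-avoiders.
-/

open List

theorem stackSort_append_cons {L R : List ℕ} {m : ℕ} (hL : ∀ x ∈ L, x < m)
    (hR : ∀ x ∈ R, x ≤ m) :
    stackSort (L ++ m :: R) = stackSort L ++ stackSort R ++ [m] := by
  have hmax : (L ++ m :: R).max?.getD 0 = m := by
    refine le_antisymm ?_ (le_max?_getD_of_mem (by simp))
    have := max_getD_mem (L ++ m :: R) (by simp)
    simp only [mem_append, mem_cons] at this
    rcases this with h | h | h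
    · exact (hL _ h).le
    · exact h.le
    · exact hR _ h
  have hLm : ∀ x ∈ L, decide (x ≠ m) = true := fun x hx => by simpa using (hL x hx).ne
  obtain ⟨a, rest, hl⟩ := exists_cons_of_ne_nil (show L ++ m :: R ≠ [] by simp)
  rw [hl, stackSort, ← hl, hmax, takeWhile_append_of_pos hLm, dropWhile_append_of_pos hLm]
  simp

theorem exists_eq_append_cons_max {l : List ℕ} (hne : l ≠ []) :
    ∃ L m R, l = L ++ m :: R ∧ (∀ x ∈ L, x < m) ∧ (∀ x ∈ R, x ≤ m) := by
  set m := l.max?.getD 0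
  have hDne : l.dropWhile (· ≠ m) ≠ [] := fun h =>
    by simpa using dropWhile_eq_nil_iff.mp h m (max_getD_mem l hne)
  have hhead : (l.dropWhile (· ≠ m)).head hDne = m := by
    simpa using head_dropWhile_not (· ≠ m) hDne
  refine ⟨l.takeWhile (· ≠ m), m, (l.dropWhile (· ≠ m)).tail, ?_, fun x hx => ?_, fun x hx => ?_⟩
  · conv_lhs =>
      rw [← takeWhile_append_dropWhile (p := (· ≠ m)) (l := l), ← cons_head_tail hDne, hhead]
  · have := mem_takeWhile_imp hx
    simp only [ne_eq, decide_eq_true_eq] at this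
    exact lt_of_le_of_ne (le_max?_getD_of_mem ((takeWhile_sublist _).mem hx)) this
  · exact le_max?_getD_of_mem ((dropWhile_sublist _).mem ((tail_sublist _).mem hx))

theorem stackSort_induction {motive : List ℕ → Prop} (nil : motive [])
    (append_cons : ∀ L m R, (∀ x ∈ L, x < m) → (∀ x ∈ R, x ≤ m) →
      motive L → motive R → motive (L ++ m :: R))
    (l : List ℕ) : motive l := by
  induction hn : l.length using Nat.strong_induction_on generalizing l with
  | _ n ih =>
    rcases eq_or_ne l [] with rfl | hne
    · exact nil
    obtain ⟨L, m, R, rfl, hL, hR⟩ := exists_eq_append_cons_max hne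
    rw [length_append, length_cons] at hn
    exact append_cons L m R hL hR (ih _ (by omega) L rfl) (ih _ (by omega) R rfl)

theorem stackSort_perm (l : List ℕ) : stackSort l ~ l := by
  induction l using stackSort_induction with
  | nil => simp [stackSort]
  | append_cons L m R hL hR ihL ihR =>
    rw [stackSort_append_cons hL hR]
    exact ((ihL.append ihR).append_right [m]).trans
      ((perm_append_singleton m _).trans perm_middle.symm)

@[simp]
theorem mem_stackSort {l : List ℕ} {x : ℕ} : x ∈ stackSort l ↔ x ∈ l :=
  (stackSort_perm l).mem_iff

theorem List.getD_mem {α : Type*} {l : List α} {j : ℕ} (d : α) (h : j < l.length) :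
    l.getD j d ∈ l := by
  rw [getD_eq_getElem _ _ h]
  exact getElem_mem h

theorem contains231_triple {a b c : ℕ} (hca : c < a) (hab : a < b) : Contains231 [a, b, c] :=
  ⟨0, 1, 2, by simp, by simp, by simp, by simpa using hca, by simpa using hab⟩

theorem Contains231.of_sublist {l₁ l₂ : List ℕ} (h : Contains231 l₁) (hl : l₁ <+ l₂) :
    Contains231 l₂ := by
  obtain ⟨f, hf⟩ := sublist_iff_exists_orderEmbedding_getElem?_eq.mp hl
  obtain ⟨j₁, j₂, j₃, h12, h23, h3, hv1, hv2⟩ := h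
  have hgetD : ∀ j, l₂.getD (f j) 0 = l₁.getD j 0 := fun j => by
    simp only [getD_eq_getElem?_getD, hf]
  have hf3 : l₂[f j₃]? = some l₁[j₃] := (hf j₃).symm.trans (getElem?_eq_getElem h3)
  refine ⟨f j₁, f j₂, f j₃, f.strictMono h12, f.strictMono h23,
    (List.getElem?_eq_some_iff.mp hf3).1, ?_, ?_⟩ <;> rwa [hgetD, hgetD]

theorem pairwise_lt_stackSort {l : List ℕ} (hnd : l.Nodup) (h231 : Avoids231 l) :
    (stackSort l).Pairwise (· < ·) := by
  induction l using stackSort_induction with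
  | nil => simp [stackSort]
  | append_cons L m R hL hR ihL ihR =>
    obtain ⟨hndL, hndmR, hdisj⟩ := nodup_append.mp hnd
    obtain ⟨hmR, hndR⟩ := nodup_cons.mp hndmR
    have hLR : ∀ a ∈ L, ∀ b ∈ R, a < b := fun a ha b hb => by
      refine lt_of_le_of_ne (not_lt.mp fun hba => h231 ?_) (hdisj a ha b (mem_cons_of_mem m hb))
      exact (contains231_triple hba (hL a ha)).of_sublist
        ((singleton_sublist.mpr ha).append ((singleton_sublist.mpr hb).cons_cons m))
    have h231L : Avoids231 L := fun h => h231 (h.of_sublist (sublist_append_left _ _))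
    have h231R : Avoids231 R := fun h =>
      h231 (h.of_sublist ((sublist_cons_self m R).trans (sublist_append_right _ _)))
    rw [stackSort_append_cons hL hR]
    refine pairwise_append.mpr ⟨pairwise_append.mpr ⟨ihL hndL h231L, ihR hndR h231R, ?_⟩,
      pairwise_singleton _ _, ?_⟩
    · simpa using hLR
    · simp only [mem_append, mem_stackSort, mem_singleton]
      rintro x (hx | hx) _ rfl
      · exact hL x hx
      · exact lt_of_le_of_ne (hR x hx) (ne_of_mem_of_not_mem hx hmR)

theorem Avoids312.map_strictMono {f : ℕ → ℕ} (hf : StrictMono f) {l : List ℕ}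
    (h : Avoids312 l) : Avoids312 (l.map f) := by
  rintro ⟨j₁, j₂, j₃, h12, h23, h3, hv1, hv2⟩
  rw [length_map] at h3
  have hgetD : ∀ j < l.length, (l.map f).getD j 0 = f (l.getD j 0) := fun j hj => by
    rw [getD_eq_getElem _ _ (by simpa using hj), getElem_map, getD_eq_getElem _ _ hj]
  rw [hgetD _ (by omega), hgetD _ (by omega), hf.lt_iff_lt] at hv1 hv2
  exact h ⟨j₁, j₂, j₃, h12, h23, h3, hv1, hv2⟩

theorem Avoids312.append {A B : List ℕ} (hA : Avoids312 A) (hB : Avoids312 B)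
    (hAB : ∀ a ∈ A, ∀ b ∈ B, a < b) : Avoids312 (A ++ B) := by
  rintro ⟨j₁, j₂, j₃, h12, h23, h3, hv1, hv2⟩
  rw [length_append] at h3
  have eA : ∀ j < A.length, (A ++ B).getD j 0 = A.getD j 0 := fun j hj => getD_append _ _ _ _ hj
  have eB : ∀ j ≥ A.length, (A ++ B).getD j 0 = B.getD (j - A.length) 0 :=
    fun j hj => getD_append_right _ _ _ _ hj
  rcases lt_or_ge j₃ A.length with h3A | h3A
  · simp only [eA j₁ (by omega), eA j₂ (by omega), eA j₃ h3A] at hv1 hv2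
    exact hA ⟨j₁, j₂, j₃, h12, h23, h3A, hv1, hv2⟩
  rcases lt_or_ge j₁ A.length with h1A | h1A
  · have := hAB _ (getD_mem 0 h1A) _ (getD_mem 0 (show j₃ - A.length < B.length by omega))
    rw [eA j₁ h1A, eB j₃ h3A] at hv2
    omega
  · simp only [eB j₁ h1A, eB j₂ (by omega), eB j₃ h3A] at hv1 hv2
    exact hB ⟨j₁ - A.length, j₂ - A.length, j₃ - A.length, by omega, by omega, by omega, hv1, hv2⟩

theorem Avoids312.append_singleton {B : List ℕ} {c : ℕ} (hB : Avoids312 B)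
    (hc : ∀ b ∈ B, c < b) : Avoids312 (B ++ [c]) := by
  rintro ⟨j₁, j₂, j₃, h12, h23, h3, hv1, hv2⟩
  rw [length_append, length_singleton] at h3
  have eB : ∀ j < B.length, (B ++ [c]).getD j 0 = B.getD j 0 := fun j hj => getD_append _ _ _ _ hj
  rcases lt_or_ge j₃ B.length with h3B | h3B
  · simp only [eB j₁ (by omega), eB j₂ (by omega), eB j₃ h3B] at hv1 hv2
    exact hB ⟨j₁, j₂, j₃, h12, h23, h3B, hv1, hv2⟩
  · have := hc _ (getD_mem 0 (show j₂ < B.length by omega))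
    rw [eB j₂ (by omega), show j₃ = B.length by omega, getD_append_right _ _ _ _ le_rfl,
      Nat.sub_self, getD_cons_zero] at hv1
    omega

theorem avoids312_map_idxOf_stackSort {l : List ℕ} (hnd : l.Nodup) :
    Avoids312 ((stackSort l).map (l.idxOf · + 1)) := by
  induction l using stackSort_induction with
  | nil => simp [stackSort, Avoids312]
  | append_cons L m R hL hR ihL ihR =>
    obtain ⟨hndL, hndmR, hdisj⟩ := nodup_append.mp hnd
    obtain ⟨hmR, hndR⟩ := nodup_cons.mp hndmR
    have hmL : m ∉ L := fun h => (hL m h).false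
    have eL : (stackSort L).map ((L ++ m :: R).idxOf · + 1) =
        (stackSort L).map (L.idxOf · + 1) :=
      map_congr_left fun x hx => by rw [idxOf_append_of_mem (mem_stackSort.mp hx)]
    have eR : (stackSort R).map ((L ++ m :: R).idxOf · + 1) =
        ((stackSort R).map (R.idxOf · + 1)).map (· + (L.length + 1)) := by
      rw [map_map]
      refine map_congr_left fun x hx => ?_
      have hxR := mem_stackSort.mp hx
      have hxL : x ∉ L := fun h => hdisj x h x (mem_cons_of_mem m hxR) rfl
      rw [idxOf_append_of_notMem hxL, idxOf_cons_ne _ (ne_of_mem_of_not_mem hxR hmR).symm]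
      simp only [Function.comp]
      omega
    have hA : ∀ v ∈ (stackSort L).map (L.idxOf · + 1), v < L.length + 1 := by
      simp only [mem_map, mem_stackSort]
      rintro _ ⟨x, hx, rfl⟩
      have := idxOf_lt_length_iff.mpr hx
      omega
    rw [stackSort_append_cons hL hR, map_append, map_append, eL, eR, append_assoc]
    simp only [map_cons, map_nil, idxOf_append_of_notMem hmL, idxOf_cons_self]
    refine (ihL hndL).append
      (((ihR hndR).map_strictMono add_left_strictMono).append_singleton (by simp)) ?_
    intro a ha b hb
    simp only [mem_append, mem_map, mem_singleton] at hb
    rcases hb with ⟨_, ⟨x, -, rfl⟩, rfl⟩ | rfl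
    · have := hA a ha; omega
    · exact hA a ha

namespace IsPermList

variable {n : ℕ} {a b l : List ℕ}

theorem length_eq (h : IsPermList n l) : l.length = n := by
  simpa using List.Perm.length_eq h

theorem nodup_s16 (h : IsPermList n l) : l.Nodup :=
  List.Perm.nodup_iff h |>.mpr nodup_range'

theorem mem_iff (h : IsPermList n l) {x : ℕ} : x ∈ l ↔ 1 ≤ x ∧ x < 1 + n :=
  (List.Perm.mem_iff h).trans mem_range'_1

theorem of_nodup (hnd : l.Nodup) (hlen : l.length = n) (hmem : ∀ x ∈ l, 1 ≤ x ∧ x < 1 + n) :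
    IsPermList n l :=
  (hnd.subperm fun x hx => mem_range'_1.mpr (hmem x hx)).perm_of_length_le (by simp [hlen])

theorem map_idxOf (ha : IsPermList n a) (hb : IsPermList n b) :
    IsPermList n (b.map (a.idxOf · + 1)) := by
  have hba : ∀ x ∈ b, x ∈ a := fun x hx => ha.mem_iff.mpr (hb.mem_iff.mp hx)
  refine of_nodup (hb.nodup_s16.map_on fun x hx y _ hxy => ?_) (by simp [hb.length_eq])
    fun v hv => ?_
  · exact (idxOf_inj (hba x hx)).mp (by simpa using hxy)
  · obtain ⟨x, hx, rfl⟩ := mem_map.mp hv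
    have := idxOf_lt_length_iff.mpr (hba x hx)
    rw [ha.length_eq] at this
    omega

end IsPermList

section

variable {n : ℕ}

theorem invw_eq_map {a : List ℕ} (ha : IsPermList n a) :
    invw a = (range' 1 n).map (a.idxOf · + 1) := by
  rw [invw, ha.length_eq]

theorem IsPermList.invw {a : List ℕ} (ha : IsPermList n a) : IsPermList n (invw a) :=
  invw_eq_map ha ▸ ha.map_idxOf (Perm.refl _)

theorem compw_invw_eq_map {a b : List ℕ} (ha : IsPermList n a) (hb : IsPermList n b) :
    compw (invw a) b = b.map (a.idxOf · + 1) := by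
  refine map_congr_left fun k hk => ?_
  obtain ⟨hk1, hkn⟩ := hb.mem_iff.mp hk
  have hk' : k - 1 < (invw a).length := by
    rw [invw, length_map, length_range', ha.length_eq]; omega
  rw [getD_eq_getElem _ _ hk']
  simp [invw, show 1 + (k - 1) = k by omega]

theorem idxOf_range' {k : ℕ} (hk1 : 1 ≤ k) (hkn : k < 1 + n) : (range' 1 n).idxOf k = k - 1 := by
  have h : k - 1 < (range' 1 n).length := by rw [length_range']; omega
  have hget : (range' 1 n)[k - 1] = k := by rw [getElem_range']; omega
  rw [← (nodup_range' (s := 1) (n := n)).idxOf_getElem _ h, hget]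

theorem map_idxOf_range' {m : List ℕ} (hm : IsPermList n m) :
    m.map ((range' 1 n).idxOf · + 1) = m := by
  refine (map_congr_left fun k hk => ?_).trans (map_id m)
  obtain ⟨hk1, hkn⟩ := hm.mem_iff.mp hk
  rw [idxOf_range' hk1 hkn]
  exact Nat.sub_add_cancel hk1

theorem invw_map_idxOf {a b : List ℕ} (ha : IsPermList n a) (hb : IsPermList n b) :
    invw (b.map (a.idxOf · + 1)) = a.map (b.idxOf · + 1) := by
  have hc := ha.map_idxOf hb
  rw [invw_eq_map hc]
  refine ext_getElem (by simp [ha.length_eq]) fun i h₁ h₂ => ?_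
  have hia : i < a.length := by simpa using h₂
  have hj : b.idxOf a[i] < b.length :=
    idxOf_lt_length_iff.mpr (hb.mem_iff.mpr (ha.mem_iff.mp (getElem_mem hia)))
  have hcj : (b.map (a.idxOf · + 1))[b.idxOf a[i]]'(by simpa using hj) = 1 + i := by
    simp only [getElem_map, getElem_idxOf hj, ha.nodup_s16.idxOf_getElem]
    omega
  simp only [getElem_map, getElem_range']
  rw [one_mul, ← hcj, hc.nodup_s16.idxOf_getElem]

theorem invw_invw {a : List ℕ} (ha : IsPermList n a) : invw (invw a) = a := by
  have hr : IsPermList n (range' 1 n) := Perm.refl _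
  rw [invw_eq_map ha, invw_map_idxOf ha hr, map_idxOf_range' ha]

theorem IsPermList.stackSort {l : List ℕ} (h : IsPermList n l) : IsPermList n (stackSort l) :=
  (stackSort_perm l).trans h

theorem skel_eq_map {l : List ℕ} (h : IsPermList n l) :
    skel l = (stackSort l).map (l.idxOf · + 1) :=
  compw_invw_eq_map h h.stackSort

theorem IsPermList.skel {l : List ℕ} (h : IsPermList n l) : IsPermList n (skel l) :=
  skel_eq_map h ▸ h.map_idxOf h.stackSort

theorem avoids312_skel {l : List ℕ} (h : IsPermList n l) : Avoids312 (skel l) :=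
  skel_eq_map h ▸ avoids312_map_idxOf_stackSort h.nodup_s16

theorem stackSort_eq_range' {l : List ℕ} (h : IsPermList n l) (h231 : Avoids231 l) :
    stackSort l = range' 1 n :=
  h.stackSort.eq_of_pairwise' (pairwise_lt_stackSort h.nodup_s16 h231)
    pairwise_lt_range'

theorem Avoids312.avoids231_invw {m : List ℕ} (hm : IsPermList n m) (h : Avoids312 m) :
    Avoids231 (invw m) := by
  rintro ⟨j₁, j₂, j₃, h12, h23, h3, hv1, hv2⟩
  rw [hm.invw.length_eq] at h3
  have hinv : ∀ j < n, (invw m).getD j 0 = m.idxOf (1 + j) + 1 := fun j hj => by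
    rw [invw_eq_map hm, getD_eq_getElem _ _ (by simpa using hj)]
    simp
  have hpos : ∀ j < n, m.getD (m.idxOf (1 + j)) 0 = 1 + j ∧ m.idxOf (1 + j) < m.length := by
    intro j hj
    have hlt := idxOf_lt_length_iff.mpr (hm.mem_iff.mpr (by omega : 1 ≤ 1 + j ∧ 1 + j < 1 + n))
    exact ⟨by rw [getD_eq_getElem _ _ hlt, getElem_idxOf], hlt⟩
  simp only [hinv j₁ (by omega), hinv j₂ (by omega), hinv j₃ h3] at hv1 hv2
  obtain ⟨g₁, -⟩ := hpos j₁ (by omega)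
  obtain ⟨g₂, p₂⟩ := hpos j₂ (by omega)
  obtain ⟨g₃, -⟩ := hpos j₃ h3
  exact h ⟨m.idxOf (1 + j₃), m.idxOf (1 + j₁), m.idxOf (1 + j₂), by omega, by omega, p₂,
    by rw [g₁, g₂]; omega, by rw [g₂, g₃]; omega⟩

theorem skel_invw {m : List ℕ} (hm : IsPermList n m) (h231 : Avoids231 (invw m)) :
    skel (invw m) = m := by
  rw [skel_eq_map hm.invw, stackSort_eq_range' hm.invw h231, ← invw_eq_map hm.invw, invw_invw hm]

end

/-- `{π⁻¹ · s(π) : π ∈ Sₙ}` is the set of 312-avoiding permutations in `Sₙ`, and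
`{s(π)⁻¹ · π : π ∈ Sₙ}` is the set of 231-avoiding permutations in `Sₙ`. -/
theorem skel_image_eq_avoiders (n : ℕ) :
    {m : List ℕ | ∃ l, IsPermList n l ∧ m = compw (invw l) (stackSort l)} =
        {m : List ℕ | IsPermList n m ∧ Avoids312 m} ∧
      {m : List ℕ | ∃ l, IsPermList n l ∧ m = compw (invw (stackSort l)) l} =
        {m : List ℕ | IsPermList n m ∧ Avoids231 m} := by
  have inv_skel {l : List ℕ} (hl : IsPermList n l) :
      compw (invw (stackSort l)) l = invw (skel l) := by
    rw [compw_invw_eq_map hl.stackSort hl, skel_eq_map hl, invw_map_idxOf hl hl.stackSort]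
  constructor <;> ext m <;> constructor
  · rintro ⟨l, hl, rfl⟩
    exact ⟨hl.skel, avoids312_skel hl⟩
  · rintro ⟨hm, h312⟩
    exact ⟨invw m, hm.invw, (skel_invw hm (h312.avoids231_invw hm)).symm⟩
  · rintro ⟨l, hl, rfl⟩
    rw [inv_skel hl]
    exact ⟨hl.skel.invw, (avoids312_skel hl).avoids231_invw hl.skel⟩
  · rintro ⟨hm, h231⟩
    refine ⟨m, hm, ?_⟩
    rw [compw_invw_eq_map hm.stackSort hm, stackSort_eq_range' hm h231,
      map_idxOf_range' hm]
end
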